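/- arXiv:2507.03140 — 3 statements merged into one kernel-verified Lean document; each statement's English description precedes it below -/
import Mathlib

section
/- Fix γ > 0 and t ∈ ℝ. For η ∈ (0, γ) let Γ_η be the contour consisting of the vertical segment from −η − iγ to −η, the semicircular arc {η e^{iθ} : θ ∈ [0, π]} traversed from −η to η through iη, and the vertical segment from η to η − iγ. Then lim_{η→0⁺} ∫_{Γ_η} e^{−itλ} λ^{−2} dλ = −2πt; equivalently, (1/(2π)) lim_{η→0⁺} ∫_{Γ_η} e^{−itλ} λ^{−2} dλ = −t. -/
/-!
On `ℂ` slit along the closed negative imaginary axis, `e(λ) λ⁻²` (for any entire `e`) has the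
primitive `-e(0) λ⁻¹ + e'(0) log(-iλ) + G(λ)`, where `G` is an entire primitive of the second
divided difference of `e` at `0`. The integral over `Γ_η` is therefore the difference of this
primitive at the endpoints `η - iγ` and `-η - iγ`. As `η → 0⁺` these tend to `-iγ` from the two
sides of the slit: the continuous part cancels and `log(-iλ)` jumps by `-2πi`. For
`e(λ) = e^{-itλ}` this gives `(-it)(-2πi) = -2πt`.
-/

open Filter

/-- The contour integral of `e^{−itλ} λ^{−2}` over `Γ_η`, the contour consisting
of the vertical segment from `−η − iγ` to `−η`, the upper semicircular arc
`{η e^{iθ} : θ ∈ [0, π]}` traversed from `−η` through `iη` to `η`, and the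
vertical segment from `η` to `η − iγ`. -/
noncomputable def gammaEtaIntegralNoLog (γ t η : ℝ) : ℂ :=
  (∫ y in (-γ)..(0 : ℝ),
      Complex.exp (-Complex.I * t * (-η + y * Complex.I)) *
        (-η + y * Complex.I) ^ (-2 : ℤ) * Complex.I) +
  (∫ θ in Real.pi..(0 : ℝ),
      Complex.exp (-Complex.I * t * (η * Complex.exp (θ * Complex.I))) *
        (η * Complex.exp (θ * Complex.I)) ^ (-2 : ℤ) *
        (Complex.I * η * Complex.exp (θ * Complex.I))) +
  (∫ y in (0 : ℝ)..(-γ),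
      Complex.exp (-Complex.I * t * (η + y * Complex.I)) *
        (η + y * Complex.I) ^ (-2 : ℤ) * Complex.I)

open Complex Set Topology intervalIntegral
open scoped Real

noncomputable def gammaEtaContourIntegral (f : ℂ → ℂ) (γ η : ℝ) : ℂ :=
  (∫ y in (-γ)..(0 : ℝ), f (-η + y * I) * I) +
  (∫ θ in π..(0 : ℝ), f (η * exp (θ * I)) * (I * η * exp (θ * I))) +
  (∫ y in (0 : ℝ)..(-γ), f (η + y * I) * I)

theorem gammaEtaIntegralNoLog_eq (γ t η : ℝ) : gammaEtaIntegralNoLog γ t η =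
    gammaEtaContourIntegral (fun z => exp (-I * t * z) * z ^ (-2 : ℤ)) γ η := rfl

theorem integral_comp_mul_deriv_eq_sub {a b : ℝ} {p p' : ℝ → ℂ} {f F : ℂ → ℂ} {S : Set ℂ}
    (hF : ∀ z ∈ S, HasDerivAt F (f z) z) (hf : ContinuousOn f S)
    (hp : ∀ s, HasDerivAt p (p' s) s) (hp' : Continuous p') (hpS : MapsTo p (uIcc a b) S) :
    ∫ s in a..b, f (p s) * p' s = F (p b) - F (p a) := by
  have hpc : Continuous p := continuous_iff_continuousAt.2 fun s => (hp s).continuousAt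
  refine integral_eq_sub_of_hasDerivAt (fun s hs => (hF _ (hpS hs)).comp s (hp s)) ?_
  exact ((hf.comp hpc.continuousOn hpS).mul hp'.continuousOn).intervalIntegrable

def lowerSlitPlane : Set ℂ := {z | -I * z ∈ slitPlane}

theorem mem_lowerSlitPlane_iff {z : ℂ} : z ∈ lowerSlitPlane ↔ 0 < z.im ∨ z.re ≠ 0 := by
  simp [lowerSlitPlane, mem_slitPlane_iff]

theorem ne_zero_of_mem_lowerSlitPlane {z : ℂ} (hz : z ∈ lowerSlitPlane) : z ≠ 0 := by
  rintro rfl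
  simp [mem_lowerSlitPlane_iff] at hz

theorem add_mul_I_mem_lowerSlitPlane {a : ℝ} (ha : a ≠ 0) (y : ℝ) :
    (a : ℂ) + y * I ∈ lowerSlitPlane := by
  simp [mem_lowerSlitPlane_iff, ha]

theorem mul_exp_mul_I_mem_lowerSlitPlane {η θ : ℝ} (hη : 0 < η) (hθ : θ ∈ uIcc π 0) :
    (η : ℂ) * exp (θ * I) ∈ lowerSlitPlane := by
  rw [uIcc_of_ge Real.pi_pos.le] at hθ
  have hsin : 0 ≤ Real.sin θ := Real.sin_nonneg_of_nonneg_of_le_pi hθ.1 hθ.2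
  rw [mem_lowerSlitPlane_iff]
  simp only [re_ofReal_mul, im_ofReal_mul, exp_ofReal_mul_I_re, exp_ofReal_mul_I_im]
  by_contra! h
  have hs : Real.sin θ = 0 := by nlinarith
  have hc : Real.cos θ = 0 := by simpa [hη.ne'] using h.2
  simpa [hs, hc] using Real.sin_sq_add_cos_sq θ

theorem hasDerivAt_add_mul_I (a : ℂ) (y : ℝ) : HasDerivAt (fun y : ℝ => a + y * I) I y := by
  simpa using ((hasDerivAt_id y).ofReal_comp.mul_const I).const_add a

theorem hasDerivAt_mul_exp_mul_I (η θ : ℝ) :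
    HasDerivAt (fun θ : ℝ => (η : ℂ) * exp (θ * I)) (I * η * exp (θ * I)) θ := by
  have h := (((hasDerivAt_id θ).ofReal_comp.mul_const I).cexp).const_mul (η : ℂ)
  simp only [id, ofReal_one, one_mul] at h
  exact h.congr_deriv (by ring)

theorem gammaEtaContourIntegral_eq_sub {f F : ℂ → ℂ}
    (hF : ∀ z ∈ lowerSlitPlane, HasDerivAt F (f z) z) (hf : ContinuousOn f lowerSlitPlane)
    (γ : ℝ) {η : ℝ} (hη : 0 < η) :
    gammaEtaContourIntegral f γ η = F (η - γ * I) - F (-η - γ * I) := by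
  have hleft := integral_comp_mul_deriv_eq_sub (a := -γ) (b := 0) hF hf
    (hasDerivAt_add_mul_I (-η)) continuous_const fun y _ => by
      simpa using add_mul_I_mem_lowerSlitPlane (neg_ne_zero.2 hη.ne') y
  have harc := integral_comp_mul_deriv_eq_sub (a := π) (b := 0) hF hf
    (hasDerivAt_mul_exp_mul_I η) (by fun_prop) fun θ hθ =>
      mul_exp_mul_I_mem_lowerSlitPlane hη hθ
  have hright := integral_comp_mul_deriv_eq_sub (a := 0) (b := -γ) hF hf
    (hasDerivAt_add_mul_I η) continuous_const fun y _ => add_mul_I_mem_lowerSlitPlane hη.ne' y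
  rw [gammaEtaContourIntegral, hleft, harc, hright]
  simp only [ofReal_zero, zero_mul, add_zero, mul_one, Complex.exp_zero, exp_pi_mul_I, ofReal_neg]
  ring_nf

theorem mul_zpow_neg_two_eq_add_dslope_dslope (e : ℂ → ℂ) {z : ℂ} (hz : z ≠ 0) :
    e z * z ^ (-2 : ℤ) = e 0 * z ^ (-2 : ℤ) + deriv e 0 * z⁻¹ + dslope (dslope e 0) 0 z := by
  rw [dslope_of_ne _ hz, slope_def_field, dslope_same, dslope_of_ne _ hz, slope_def_field]
  field_simp
  ring

theorem exists_primitive_mul_zpow_neg_two {e : ℂ → ℂ} (he : Differentiable ℂ e) :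
    ∃ G : ℂ → ℂ, Continuous G ∧ ∀ z ∈ lowerSlitPlane,
      HasDerivAt (fun z => -(e 0 * z⁻¹) + deriv e 0 * log (-I * z) + G z)
        (e z * z ^ (-2 : ℤ)) z := by
  have hg : Differentiable ℂ (dslope (dslope e 0) 0) := by
    rw [← differentiableOn_univ, differentiableOn_dslope univ_mem, differentiableOn_dslope univ_mem]
    exact he.differentiableOn
  obtain ⟨G, hG⟩ := hg.isExactOn_univ
  refine ⟨G, continuous_iff_continuousAt.2 fun z => (hG z trivial).continuousAt, fun z hz => ?_⟩
  have hz0 := ne_zero_of_mem_lowerSlitPlane hz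
  have hlog := ((hasDerivAt_id z).const_mul (-I)).clog hz
  refine ((((hasDerivAt_inv hz0).const_mul (e 0)).neg.add (hlog.const_mul (deriv e 0))).add
    (hG z trivial)).congr_deriv ?_
  rw [mul_zpow_neg_two_eq_add_dslope_dslope e hz0, zpow_neg, zpow_ofNat, id]
  field_simp

theorem tendsto_log_sub_log_across_negative_real_axis {x : ℝ} (hx : x < 0) :
    Tendsto (fun η : ℝ => log (x - η * I) - log (x + η * I)) (𝓝[>] 0) (𝓝 (-2 * π * I)) := by
  have hbelow : Tendsto (fun η : ℝ => (x : ℂ) - η * I) (𝓝[>] 0) (𝓝[{z | z.im < 0}] x) := by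
    refine tendsto_nhdsWithin_iff.2 ⟨?_, ?_⟩
    · exact ((by fun_prop : Continuous fun η : ℝ => (x : ℂ) - η * I).tendsto' 0 x
        (by simp)).mono_left nhdsWithin_le_nhds
    · filter_upwards [self_mem_nhdsWithin] with η hη
      simpa using hη
  have habove : Tendsto (fun η : ℝ => (x : ℂ) + η * I) (𝓝[>] 0) (𝓝[{z | 0 ≤ z.im}] x) := by
    refine tendsto_nhdsWithin_iff.2 ⟨?_, ?_⟩
    · exact ((by fun_prop : Continuous fun η : ℝ => (x : ℂ) + η * I).tendsto' 0 x
        (by simp)).mono_left nhdsWithin_le_nhds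
    · filter_upwards [self_mem_nhdsWithin] with η hη
      simpa using le_of_lt hη
  have hre : (x : ℂ).re < 0 := by simpa
  have him : (x : ℂ).im = 0 := ofReal_im x
  have hlow := (tendsto_log_nhdsWithin_im_neg_of_re_neg_of_im_zero hre him).comp hbelow
  have hup := (continuousWithinAt_log_of_re_neg_of_im_zero hre him).tendsto.comp habove
  have hjump : (Real.log ‖(x : ℂ)‖ : ℂ) - π * I - log x = -2 * π * I := by
    rw [log, arg_ofReal_of_neg hx]
    ring
  exact hjump ▸ hlow.sub hup

theorem tendsto_gammaEtaContourIntegral_mul_zpow_neg_two {e : ℂ → ℂ} (he : Differentiable ℂ e)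
    {γ : ℝ} (hγ : 0 < γ) :
    Tendsto (fun η => gammaEtaContourIntegral (fun z => e z * z ^ (-2 : ℤ)) γ η) (𝓝[>] 0)
      (𝓝 (-2 * π * I * deriv e 0)) := by
  obtain ⟨G, hG, hF⟩ := exists_primitive_mul_zpow_neg_two he
  have hcont : ContinuousOn (fun z => e z * z ^ (-2 : ℤ)) lowerSlitPlane := fun z hz =>
    (he.continuous.continuousAt.mul (continuousAt_zpow₀ z (-2)
      (Or.inl (ne_zero_of_mem_lowerSlitPlane hz)))).continuousWithinAt
  set A : ℂ → ℂ := fun z => -(e 0 * z⁻¹) + G z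
  have hA : ContinuousAt A (-γ * I) := by
    have : (-γ * I : ℂ) ≠ 0 := by simp [hγ.ne']
    exact (((continuousAt_inv₀ this).const_mul _).neg).add hG.continuousAt
  have hends : ∀ s : ℝ, Tendsto (fun η : ℝ => (s * η : ℂ) - γ * I) (𝓝[>] 0) (𝓝 (-γ * I)) :=
    fun s => ((by fun_prop : Continuous fun η : ℝ => (s * η : ℂ) - γ * I).tendsto' 0 _
      (by simp)).mono_left nhdsWithin_le_nhds
  have hAlim : Tendsto (fun η : ℝ => A (η - γ * I) - A (-η - γ * I)) (𝓝[>] 0) (𝓝 0) := by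
    simpa using (hA.tendsto.comp (hends 1)).sub (hA.tendsto.comp (hends (-1)))
  have hlog := (tendsto_log_sub_log_across_negative_real_axis (neg_lt_zero.2 hγ)).const_mul
    (deriv e 0)
  rw [show -2 * π * I * deriv e 0 = 0 + deriv e 0 * (-2 * π * I) by ring]
  refine (hAlim.add hlog).congr' ?_
  filter_upwards [self_mem_nhdsWithin] with η hη
  have hlower : -I * ((η : ℂ) - γ * I) = ((-γ : ℝ) : ℂ) - η * I := by
    push_cast
    linear_combination (γ : ℂ) * I_sq
  have hupper : -I * (-(η : ℂ) - γ * I) = ((-γ : ℝ) : ℂ) + η * I := by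
    push_cast
    linear_combination (γ : ℂ) * I_sq
  rw [gammaEtaContourIntegral_eq_sub hF hcont γ hη, hlower, hupper]
  ring

/-- For any `γ > 0` and `t ∈ ℝ`,
`lim_{η→0⁺} ∫_{Γ_η} e^{−itλ} λ^{−2} dλ = −2πt`. -/
theorem stmt1 (γ : ℝ) (hγ : 0 < γ) (t : ℝ) :
    Tendsto (fun η : ℝ => gammaEtaIntegralNoLog γ t η)
      (nhdsWithin 0 (Set.Ioi 0)) (nhds (-(2 * Real.pi * t) : ℂ)) := by
  have hexp : HasDerivAt (fun z : ℂ => exp (-I * t * z)) (-I * t) 0 := by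
    simpa using ((hasDerivAt_id (0 : ℂ)).const_mul (-I * t)).cexp
  have hlim : -2 * π * I * (-I * t) = -(2 * π * t) := by
    linear_combination (2 * π * t : ℂ) * I_sq
  simp only [gammaEtaIntegralNoLog_eq]
  simpa only [hexp.deriv, hlim] using
    tendsto_gammaEtaContourIntegral_mul_zpow_neg_two (e := fun z => exp (-I * t * z))
      (by fun_prop) hγ
end

section
/- Let a₀ > 0 and let χ : ℝ² → ℝ be smooth with compact support, 0 ≤ χ ≤ 1, χ ≡ 1 on a neighborhood of the origin, and suppose in addition that (∂_{x₁}χ)(0, x₂) = 0 for all x₂ ∈ ℝ. Define u_p(x) = (1 − χ(x)) x₁/|x|² + χ(x) a₀ x₁ for x ≠ 0 (smoothly extended by a₀x₁ near 0). Then (Δu_p)(0, x₂) = 0 for all x₂ ≠ 0; that is, Δu_p vanishes on the entire zero set of u_p. -/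
/-- First partial derivative of a function on `ℝ²`. -/
noncomputable def pd1 (f : ℝ × ℝ → ℝ) (x : ℝ × ℝ) : ℝ :=
  deriv (fun s => f (s, x.2)) x.1

/-- Second partial derivative of a function on `ℝ²`. -/
noncomputable def pd2 (f : ℝ × ℝ → ℝ) (x : ℝ × ℝ) : ℝ :=
  deriv (fun s => f (x.1, s)) x.2

/-- The Laplacian `Δf = ∂₁²f + ∂₂²f` on `ℝ²`. -/
noncomputable def lap (f : ℝ × ℝ → ℝ) (x : ℝ × ℝ) : ℝ :=
  pd1 (pd1 f) x + pd2 (pd2 f) x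


/-!
Write `u_p = x₁ · φ` with `φ = (1 - χ) / |x|² + a₀ χ`. Then `u_p` vanishes on the axis
`x₁ = 0`, so `∂₂²u_p = 0` there, while `∂₁²(x₁ φ) = 2 ∂₁φ` at `x₁ = 0`. Finally
`∂₁φ = -∂₁χ / |x|² + (1 - χ) ∂₁(|x|⁻²) + a₀ ∂₁χ` vanishes on the axis, because both `∂₁χ`
and `∂₁(|x|⁻²) = -2x₁ / |x|⁴` do.
-/

lemma pd1_pd1_apply (f : ℝ × ℝ → ℝ) (x : ℝ × ℝ) :
    pd1 (pd1 f) x = deriv (deriv fun s => f (s, x.2)) x.1 :=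
  rfl

lemma pd2_pd2_apply (f : ℝ × ℝ → ℝ) (x : ℝ × ℝ) :
    pd2 (pd2 f) x = deriv (deriv fun s => f (x.1, s)) x.2 :=
  rfl

lemma deriv_deriv_id_mul_at_zero {φ : ℝ → ℝ} (hφ : ContDiff ℝ 2 φ) :
    deriv (deriv fun t => t * φ t) 0 = 2 * deriv φ 0 := by
  obtain ⟨hφd, -, hφ'⟩ := contDiff_succ_iff_deriv.mp (show ContDiff ℝ (1 + 1) φ from hφ)
  have hderiv : deriv (fun t => t * φ t) = fun t => φ t + t * deriv φ t := by
    funext t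
    simpa using ((hasDerivAt_id' t).fun_mul (hφd t).hasDerivAt).deriv
  have h2 := ((hφd 0).hasDerivAt.fun_add
    ((hasDerivAt_id' (0 : ℝ)).fun_mul (hφ'.differentiable one_ne_zero 0).hasDerivAt)).deriv
  rw [hderiv, h2]
  ring

lemma lap_at_axis_of_eq_id_mul {f : ℝ × ℝ → ℝ} {φ : ℝ → ℝ} {x₂ : ℝ} (hφ : ContDiff ℝ 2 φ)
    (hslice : ∀ t, f (t, x₂) = t * φ t) (haxis : ∀ s, f (0, s) = 0) :
    lap f (0, x₂) = 2 * deriv φ 0 := by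
  have hpd1 : pd1 (pd1 f) (0, x₂) = 2 * deriv φ 0 := by
    rw [pd1_pd1_apply, funext hslice]
    exact deriv_deriv_id_mul_at_zero hφ
  have hpd2 : pd2 (pd2 f) (0, x₂) = 0 := by
    simp [pd2_pd2_apply, haxis]
  rw [lap, hpd1, hpd2, add_zero]

lemma hasDerivAt_inv_sq_add_at_zero {b : ℝ} (hb : b ≠ 0) :
    HasDerivAt (fun t : ℝ => (t ^ 2 + b)⁻¹) 0 0 := by
  have h := ((hasDerivAt_pow 2 (0 : ℝ)).add_const b).fun_inv (by simpa using hb)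
  simpa using h

lemma deriv_interpolate_at_zero {c : ℝ → ℝ} (hc : DifferentiableAt ℝ c 0) (hc0 : deriv c 0 = 0)
    {b : ℝ} (hb : b ≠ 0) (a : ℝ) :
    deriv (fun t => (1 - c t) * (t ^ 2 + b)⁻¹ + c t * a) 0 = 0 := by
  have h := (((hasDerivAt_const (0 : ℝ) (1 : ℝ)).fun_sub hc.hasDerivAt).fun_mul
    (hasDerivAt_inv_sq_add_at_zero hb)).fun_add (hc.hasDerivAt.mul_const a)
  rw [h.deriv, hc0]
  ring

theorem stmt6_general (a₀ : ℝ) (χ : ℝ × ℝ → ℝ) (hχ : ContDiff ℝ (⊤ : ℕ∞) χ)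
    (hflat : ∀ x₂ : ℝ, pd1 χ (0, x₂) = 0) :
    ∀ x₂ : ℝ, x₂ ≠ 0 →
      lap (fun y => (1 - χ y) * (y.1 / (y.1 ^ 2 + y.2 ^ 2)) + χ y * (a₀ * y.1)) (0, x₂) = 0 := by
  intro x₂ hx₂
  have hb : x₂ ^ 2 ≠ 0 := pow_ne_zero 2 hx₂
  set c : ℝ → ℝ := fun t => χ (t, x₂)
  have hc : ContDiff ℝ 2 c :=
    (hχ.of_le (WithTop.coe_le_coe.mpr le_top)).comp (contDiff_id.prodMk contDiff_const)
  have hφ : ContDiff ℝ 2 fun t => (1 - c t) * (t ^ 2 + x₂ ^ 2)⁻¹ + c t * a₀ :=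
    ((contDiff_const.sub hc).mul
      ((contDiff_id.pow 2).add contDiff_const |>.inv fun t => by positivity)).add
      (hc.mul contDiff_const)
  rw [lap_at_axis_of_eq_id_mul hφ (fun t => by ring) (fun s => by simp),
    deriv_interpolate_at_zero (hc.differentiable (by simp) 0) (hflat x₂) hb a₀, mul_zero]

/-- For `a₀ > 0` and smooth compactly supported `χ` with `0 ≤ χ ≤ 1`, `χ ≡ 1`
near the origin, and `∂₁χ(0,x₂) = 0` for all `x₂`, the function
`u_p(x) = (1−χ(x)) x₁/|x|² + χ(x) a₀ x₁` satisfies `Δu_p(0,x₂) = 0` for all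
`x₂ ≠ 0`: the Laplacian vanishes on the whole zero set of `u_p`. -/
theorem stmt6 (a₀ : ℝ) (ha₀ : 0 < a₀) (χ : ℝ × ℝ → ℝ) (hχ : ContDiff ℝ (⊤ : ℕ∞) χ)
    (hsupp : HasCompactSupport χ) (hrange : ∀ x, 0 ≤ χ x ∧ χ x ≤ 1)
    (hone : ∀ᶠ x in nhds (0 : ℝ × ℝ), χ x = 1)
    (hflat : ∀ x₂ : ℝ, pd1 χ (0, x₂) = 0) :
    ∀ x₂ : ℝ, x₂ ≠ 0 →
      lap (fun y => (1 - χ y) * (y.1 / (y.1 ^ 2 + y.2 ^ 2)) + χ y * (a₀ * y.1)) (0, x₂) = 0 :=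
  stmt6_general a₀ χ hχ hflat
end

section
/- Let a₀ > 0, let χ : ℝ² → ℝ be smooth with compact support, 0 ≤ χ ≤ 1, χ ≡ 1 on a neighborhood of the origin, with (∂_{x₁}χ)(0, x₂) = 0 for all x₂ ∈ ℝ, and let c : ℝ² → ℝ be smooth with 0 < c_m ≤ c(x) ≤ c_M < ∞ for all x. Define u_p(x) = (1 − χ(x)) x₁/|x|² + χ(x) a₀ x₁ for x ≠ 0, smoothly extended by a₀x₁ near 0. Then there exists a smooth, compactly supported, real-valued function V on ℝ² such that −c(x)² Δu_p(x) + V(x) u_p(x) = 0 for all x ∈ ℝ². -/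
open Filter Topology
open scoped ContDiff

section PartialDerivatives

variable {f g : ℝ × ℝ → ℝ} {x : ℝ × ℝ}

lemma hasDerivAt_pd1 (hf : DifferentiableAt ℝ f x) :
    HasDerivAt (fun s => f (s, x.2)) (pd1 f x) x.1 :=
  (hf.comp x.1 (differentiableAt_id.prodMk (differentiableAt_const x.2))).hasDerivAt

lemma hasDerivAt_pd2 (hf : DifferentiableAt ℝ f x) :
    HasDerivAt (fun s => f (x.1, s)) (pd2 f x) x.2 :=
  (hf.comp x.2 ((differentiableAt_const x.1).prodMk differentiableAt_id)).hasDerivAt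

lemma pd1_eq_fderiv (hf : DifferentiableAt ℝ f x) : pd1 f x = fderiv ℝ f x (1, 0) :=
  (hf.hasFDerivAt.comp_hasDerivAt x.1 ((hasDerivAt_id x.1).prodMk (hasDerivAt_const x.1 x.2))).deriv

lemma pd2_eq_fderiv (hf : DifferentiableAt ℝ f x) : pd2 f x = fderiv ℝ f x (0, 1) :=
  (hf.hasFDerivAt.comp_hasDerivAt x.2 ((hasDerivAt_const x.2 x.1).prodMk (hasDerivAt_id x.2))).deriv

lemma contDiff_pd1 (hf : ContDiff ℝ ∞ f) : ContDiff ℝ ∞ (pd1 f) := by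
  have hd := hf.differentiable (by simp)
  rw [show pd1 f = fun x => fderiv ℝ f x (1, 0) from funext fun x => pd1_eq_fderiv (hd x)]
  exact (hf.fderiv_right (by simp)).clm_apply contDiff_const

lemma contDiff_pd2 (hf : ContDiff ℝ ∞ f) : ContDiff ℝ ∞ (pd2 f) := by
  have hd := hf.differentiable (by simp)
  rw [show pd2 f = fun x => fderiv ℝ f x (0, 1) from funext fun x => pd2_eq_fderiv (hd x)]
  exact (hf.fderiv_right (by simp)).clm_apply contDiff_const

lemma contDiff_lap (hf : ContDiff ℝ ∞ f) : ContDiff ℝ ∞ (lap f) :=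
  (contDiff_pd1 (contDiff_pd1 hf)).add (contDiff_pd2 (contDiff_pd2 hf))

lemma Filter.EventuallyEq.pd1_eq (h : f =ᶠ[𝓝 x] g) : pd1 f x = pd1 g x :=
  (h.comp_tendsto (Continuous.tendsto' (by fun_prop) x.1 x rfl)).deriv_eq

lemma Filter.EventuallyEq.pd2_eq (h : f =ᶠ[𝓝 x] g) : pd2 f x = pd2 g x :=
  (h.comp_tendsto (Continuous.tendsto' (by fun_prop) x.2 x rfl)).deriv_eq

lemma Filter.EventuallyEq.lap_eq (h : f =ᶠ[𝓝 x] g) : lap f x = lap g x := by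
  have h1 : pd1 f =ᶠ[𝓝 x] pd1 g := h.eventuallyEq_nhds.mono fun _ hy => hy.pd1_eq
  have h2 : pd2 f =ᶠ[𝓝 x] pd2 g := h.eventuallyEq_nhds.mono fun _ hy => hy.pd2_eq
  rw [lap, lap, h1.pd1_eq, h2.pd2_eq]

lemma pd2_pd2_eq_pd1_pd1_swap (hf : ∀ y, f y.swap = f y) :
    pd2 (pd2 f) x = pd1 (pd1 f) x.swap := by
  have : pd2 f = fun y => pd1 f y.swap := funext fun y => by
    simp only [pd2, pd1, Prod.fst_swap, Prod.snd_swap, ← hf (y.1, _), Prod.swap_prod_mk]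
  rw [this]
  rfl

lemma pd1_fst_mul (hf : DifferentiableAt ℝ f x) :
    pd1 (fun y => y.1 * f y) x = f x + x.1 * pd1 f x := by
  have h := ((hasDerivAt_id' x.1).fun_mul (hasDerivAt_pd1 hf)).deriv
  rwa [one_mul] at h

lemma pd2_fst_mul (hf : DifferentiableAt ℝ f x) :
    pd2 (fun y => y.1 * f y) x = x.1 * pd2 f x :=
  ((hasDerivAt_pd2 hf).const_mul x.1).deriv

lemma lap_fst_mul (hf : ContDiff ℝ ∞ f) (x : ℝ × ℝ) :
    lap (fun y => y.1 * f y) x = x.1 * lap f x + 2 * pd1 f x := by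
  have hd : Differentiable ℝ f := hf.differentiable (by simp)
  have hd1 : Differentiable ℝ (pd1 f) := (contDiff_pd1 hf).differentiable (by simp)
  have hd2 : Differentiable ℝ (pd2 f) := (contDiff_pd2 hf).differentiable (by simp)
  have e1 : pd1 (fun y => y.1 * f y) = fun y => f y + y.1 * pd1 f y :=
    funext fun y => pd1_fst_mul (hd y)
  have e2 : pd2 (fun y => y.1 * f y) = fun y => y.1 * pd2 f y :=
    funext fun y => pd2_fst_mul (hd y)
  have e11 : pd1 (fun y => f y + y.1 * pd1 f y) x = pd1 f x + (pd1 f x + x.1 * pd1 (pd1 f) x) :=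
    ((hasDerivAt_pd1 (hd x)).add ((hasDerivAt_pd1 (f := fun y => y.1 * pd1 f y)
      ((differentiable_fst.mul hd1) x)).congr_deriv (pd1_fst_mul (hd1 x)))).deriv
  rw [lap, lap, e1, e2, e11, pd2_fst_mul (hd2 x)]
  ring

end PartialDerivatives

noncomputable def invNormSq (y : ℝ × ℝ) : ℝ := (y.1 ^ 2 + y.2 ^ 2)⁻¹

section InvNormSq

variable {x : ℝ × ℝ}

lemma normSq_pos (hx : x ≠ 0) : 0 < x.1 ^ 2 + x.2 ^ 2 := by
  rcases x with ⟨a, b⟩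
  rw [Ne, Prod.mk_eq_zero, not_and_or] at hx
  rcases hx with h | h <;> positivity

lemma invNormSq_pos (hx : x ≠ 0) : 0 < invNormSq x := inv_pos.mpr (normSq_pos hx)

lemma invNormSq_swap (y : ℝ × ℝ) : invNormSq y.swap = invNormSq y := by
  simp [invNormSq, add_comm]

lemma contDiffAt_invNormSq (hx : x ≠ 0) : ContDiffAt ℝ ∞ invNormSq x :=
  ((contDiff_fst.pow 2).add (contDiff_snd.pow 2)).contDiffAt.inv (normSq_pos hx).ne'

lemma hasDerivAt_invNormSq_fst (hx : x ≠ 0) :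
    HasDerivAt (fun s => invNormSq (s, x.2)) (-2 * x.1 * invNormSq x ^ 2) x.1 := by
  refine (((hasDerivAt_pow 2 x.1).add_const (x.2 ^ 2)).inv (normSq_pos hx).ne').congr_deriv ?_
  simp only [invNormSq, inv_pow]
  ring

lemma pd1_invNormSq (hx : x ≠ 0) : pd1 invNormSq x = -2 * x.1 * invNormSq x ^ 2 :=
  (hasDerivAt_invNormSq_fst hx).deriv

lemma pd1_pd1_invNormSq (hx : x ≠ 0) :
    pd1 (pd1 invNormSq) x = -2 * invNormSq x ^ 2 + 8 * x.1 ^ 2 * invNormSq x ^ 3 := by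
  have h : pd1 invNormSq =ᶠ[𝓝 x] fun y => -2 * y.1 * invNormSq y ^ 2 :=
    (eventually_ne_nhds hx).mono fun y hy => pd1_invNormSq hy
  have hd : HasDerivAt (fun s => -2 * s * invNormSq (s, x.2) ^ 2)
      (-2 * invNormSq x ^ 2 + 8 * x.1 ^ 2 * invNormSq x ^ 3) x.1 := by
    refine (((hasDerivAt_id' x.1).const_mul (-2)).fun_mul
      ((hasDerivAt_invNormSq_fst hx).fun_pow 2)).congr_deriv ?_
    simp only [Nat.cast_ofNat]
    ring
  rw [h.pd1_eq]
  exact hd.deriv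

lemma lap_invNormSq (hx : x ≠ 0) : lap invNormSq x = 4 * invNormSq x ^ 2 := by
  have hx' : x.swap ≠ 0 := fun h => hx (by simpa using congrArg Prod.swap h)
  rw [lap, pd2_pd2_eq_pd1_pd1_swap invNormSq_swap, pd1_pd1_invNormSq hx, pd1_pd1_invNormSq hx',
    invNormSq_swap]
  have hq : (x.1 ^ 2 + x.2 ^ 2) * invNormSq x = 1 := mul_inv_cancel₀ (normSq_pos hx).ne'
  simp only [Prod.fst_swap]
  linear_combination 8 * invNormSq x ^ 2 * hq

-- By `lap_fst_mul`, this says that `x₁ / |x|²` is harmonic off the origin.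
lemma fst_mul_lap_invNormSq_add_two_mul_pd1 (hx : x ≠ 0) :
    x.1 * lap invNormSq x + 2 * pd1 invNormSq x = 0 := by
  rw [lap_invNormSq hx, pd1_invNormSq hx]
  ring

end InvNormSq

section ParametricIntegral

open MeasureTheory

universe u

variable {H X : Type u} [NormedAddCommGroup H] [NormedSpace ℝ H] [ProperSpace H]

lemma hasFDerivAt_intervalIntegral_param [NormedAddCommGroup X] [NormedSpace ℝ X]
    [CompleteSpace X] {F : H × ℝ → X} (hF : ContDiff ℝ ∞ F) (a b : ℝ) (x₀ : H) :
    HasFDerivAt (fun x => ∫ t in a..b, F (x, t))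
      (∫ t in a..b, (fderiv ℝ F (x₀, t)).comp (ContinuousLinearMap.inl ℝ H ℝ)) x₀ := by
  have hF' : Continuous (fderiv ℝ F) := hF.continuous_fderiv (by simp)
  obtain ⟨C, hC⟩ := ((isCompact_closedBall x₀ 1).prod (isCompact_uIcc (a := a) (b := b))
    ).exists_bound_of_continuousOn hF'.continuousOn
  refine intervalIntegral.hasFDerivAt_integral_of_dominated_of_fderiv_le (bound := fun _ => C)
    (Metric.ball_mem_nhds x₀ one_pos)
    (.of_forall fun x => (hF.continuous.comp (by fun_prop)).aestronglyMeasurable)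
    ((hF.continuous.comp (by fun_prop)).intervalIntegrable a b)
    ((hF'.comp (by fun_prop)).clm_comp continuous_const).aestronglyMeasurable
    (.of_forall fun t ht x hx => ?_) intervalIntegrable_const
    (.of_forall fun t _ x _ => (hF.differentiable (by simp) _).hasFDerivAt.comp x
      (hasFDerivAt_prodMk_left x t))
  calc ‖(fderiv ℝ F (x, t)).comp (ContinuousLinearMap.inl ℝ H ℝ)‖
      ≤ ‖fderiv ℝ F (x, t)‖ * ‖ContinuousLinearMap.inl ℝ H ℝ‖ :=
        ContinuousLinearMap.opNorm_comp_le _ _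
    _ ≤ C * 1 := by
        have hxt := hC (x, t) ⟨Metric.ball_subset_closedBall hx, Set.uIoc_subset_uIcc ht⟩
        gcongr
        · exact (norm_nonneg _).trans hxt
        · exact ContinuousLinearMap.norm_inl_le_one ℝ H ℝ
    _ = C := mul_one C

lemma contDiff_intervalIntegral_param [NormedAddCommGroup X] [NormedSpace ℝ X]
    [CompleteSpace X] {F : H × ℝ → X} (hF : ContDiff ℝ ∞ F) (a b : ℝ) :
    ContDiff ℝ ∞ (fun x => ∫ t in a..b, F (x, t)) := by
  rw [contDiff_infty]
  intro n
  induction n generalizing X with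
  | zero =>
    exact contDiff_zero.mpr
      (continuous_iff_continuousAt.mpr fun x =>
        (hasFDerivAt_intervalIntegral_param hF a b x).continuousAt)
  | succ n ih =>
    rw [Nat.cast_succ, contDiff_succ_iff_fderiv]
    refine ⟨fun x => (hasFDerivAt_intervalIntegral_param hF a b x).differentiableAt, by simp, ?_⟩
    rw [funext fun x => (hasFDerivAt_intervalIntegral_param hF a b x).fderiv]
    exact ih (X := H →L[ℝ] X) ((hF.fderiv_right (m := ∞) (by simp)).clm_comp contDiff_const)

end ParametricIntegral

lemma exists_contDiff_eq_fst_mul {f : ℝ × ℝ → ℝ} (hf : ContDiff ℝ ∞ f)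
    (h0 : ∀ x₂, f (0, x₂) = 0) : ∃ k : ℝ × ℝ → ℝ, ContDiff ℝ ∞ k ∧ ∀ x, f x = x.1 * k x := by
  refine ⟨fun x => ∫ t in (0 : ℝ)..1, pd1 f (t * x.1, x.2),
    contDiff_intervalIntegral_param ((contDiff_pd1 hf).comp
      (by fun_prop : ContDiff ℝ ∞ fun p : (ℝ × ℝ) × ℝ => (p.2 * p.1.1, p.1.2))) 0 1, fun x => ?_⟩
  have hderiv : ∀ t : ℝ, HasDerivAt (fun s => f (s * x.1, x.2)) (pd1 f (t * x.1, x.2) * x.1) t :=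
    fun t => HasDerivAt.comp (h₂ := fun s => f (s, x.2)) t
      (hasDerivAt_pd1 (x := (t * x.1, x.2)) (hf.differentiable (by simp) _))
      (hasDerivAt_mul_const x.1)
  have hcont : Continuous fun t : ℝ => pd1 f (t * x.1, x.2) * x.1 :=
    ((contDiff_pd1 hf).continuous.comp (by fun_prop)).mul continuous_const
  have hFTC := intervalIntegral.integral_eq_sub_of_hasDerivAt (fun t _ => hderiv t)
    (hcont.intervalIntegrable 0 1)
  rw [intervalIntegral.integral_mul_const] at hFTC
  simp only [one_mul, zero_mul, h0, sub_zero] at hFTC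
  rw [← hFTC, mul_comm]

lemma eqOn_zero_of_fst_mul {g : ℝ × ℝ → ℝ} {W : Set (ℝ × ℝ)} (hg : ContinuousOn g W)
    (hW : IsOpen W) (h : ∀ x ∈ W, x.1 * g x = 0) : ∀ x ∈ W, g x = 0 := by
  have hdense : Dense {x : ℝ × ℝ | x.1 ≠ 0} := (dense_compl_singleton 0).preimage isOpenMap_fst
  refine Set.EqOn.of_subset_closure (s := W ∩ {x | x.1 ≠ 0}) (fun x hx => ?_) hg
    continuousOn_const Set.inter_subset_left (hdense.open_subset_closure_inter hW)
  exact (mul_eq_zero.mp (h x hx.1)).resolve_left hx.2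

noncomputable def profile (a₀ : ℝ) (χ : ℝ × ℝ → ℝ) (y : ℝ × ℝ) : ℝ :=
  (1 - χ y) * invNormSq y + χ y * a₀

section Profile

variable {a₀ : ℝ} {χ : ℝ × ℝ → ℝ}

lemma fst_mul_profile (y : ℝ × ℝ) :
    (1 - χ y) * (y.1 / (y.1 ^ 2 + y.2 ^ 2)) + χ y * (a₀ * y.1) = y.1 * profile a₀ χ y := by
  simp only [profile, invNormSq]
  ring

lemma profile_eventuallyEq_const (hone : ∀ᶠ x in 𝓝 0, χ x = 1) :
    profile a₀ χ =ᶠ[𝓝 0] fun _ => a₀ :=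
  hone.mono fun y hy => by simp [profile, hy]

lemma profile_eventuallyEq_invNormSq {x : ℝ × ℝ} (hx : x ∉ tsupport χ) :
    profile a₀ χ =ᶠ[𝓝 x] invNormSq :=
  (notMem_tsupport_iff_eventuallyEq.mp hx).mono fun y hy => by simp [profile, hy]

lemma contDiff_profile (hχ : ContDiff ℝ ∞ χ) (hone : ∀ᶠ x in 𝓝 0, χ x = 1) :
    ContDiff ℝ ∞ (profile a₀ χ) := by
  refine contDiff_iff_contDiffAt.mpr fun y => ?_
  rcases eq_or_ne y 0 with rfl | hy
  · exact contDiffAt_const.congr_of_eventuallyEq (profile_eventuallyEq_const hone)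
  · exact ((contDiffAt_const.sub hχ.contDiffAt).mul (contDiffAt_invNormSq hy)).add
      (hχ.contDiffAt.mul contDiffAt_const)

lemma profile_pos (ha₀ : 0 < a₀) (hrange : ∀ x, 0 ≤ χ x ∧ χ x ≤ 1)
    (hone : ∀ᶠ x in 𝓝 0, χ x = 1) (x : ℝ × ℝ) : 0 < profile a₀ χ x := by
  rcases eq_or_ne x 0 with rfl | hx
  · simpa [profile, hone.self_of_nhds] using ha₀
  · have hq := invNormSq_pos hx
    obtain ⟨h0, h1⟩ := hrange x
    unfold profile
    nlinarith [mul_pos hq ha₀, mul_nonneg (sub_nonneg.2 h1) (sq_nonneg (invNormSq x)),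
      mul_nonneg h0 (sq_nonneg a₀)]

lemma pd1_profile_zero_fst (hχ : Differentiable ℝ χ) (hone : ∀ᶠ x in 𝓝 0, χ x = 1)
    (hflat : ∀ x₂, pd1 χ (0, x₂) = 0) (x₂ : ℝ) : pd1 (profile a₀ χ) (0, x₂) = 0 := by
  rcases eq_or_ne x₂ 0 with rfl | hx₂
  · rw [Prod.mk_zero_zero, (profile_eventuallyEq_const hone).pd1_eq]
    exact deriv_const _ _
  · have hx : ((0 : ℝ), x₂) ≠ 0 := by simp [hx₂]
    have hχ' := hasDerivAt_pd1 (hχ (0, x₂))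
    have hd := (((hasDerivAt_const (0 : ℝ) (1 : ℝ)).fun_sub hχ').fun_mul
      (hasDerivAt_invNormSq_fst hx)).fun_add (hχ'.mul_const a₀)
    rw [hflat] at hd
    simpa [pd1, profile] using hd.deriv

end Profile

theorem stmt7_general (a₀ : ℝ) (ha₀ : 0 < a₀) (χ : ℝ × ℝ → ℝ) (hχ : ContDiff ℝ (⊤ : ℕ∞) χ)
    (hsupp : HasCompactSupport χ) (hrange : ∀ x, 0 ≤ χ x ∧ χ x ≤ 1)
    (hone : ∀ᶠ x in nhds (0 : ℝ × ℝ), χ x = 1)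
    (hflat : ∀ x₂ : ℝ, pd1 χ (0, x₂) = 0)
    (c : ℝ × ℝ → ℝ) (hc : ContDiff ℝ (⊤ : ℕ∞) c) :
    ∃ V : ℝ × ℝ → ℝ, ContDiff ℝ (⊤ : ℕ∞) V ∧ HasCompactSupport V ∧
      ∀ x : ℝ × ℝ,
        -(c x) ^ 2 * lap (fun y => (1 - χ y) * (y.1 / (y.1 ^ 2 + y.2 ^ 2)) + χ y * (a₀ * y.1)) x +
          V x * ((1 - χ x) * (x.1 / (x.1 ^ 2 + x.2 ^ 2)) + χ x * (a₀ * x.1)) = 0 := by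
  set h := profile a₀ χ
  have hh : ContDiff ℝ ∞ h := contDiff_profile hχ hone
  obtain ⟨G, hG, hpd1h⟩ := exists_contDiff_eq_fst_mul (contDiff_pd1 hh)
    (pd1_profile_zero_fst (hχ.differentiable (by simp)) hone hflat)
  set g := fun x => lap h x + 2 * G x
  have hlap : ∀ x, lap (fun y => y.1 * h y) x = x.1 * g x := fun x => by
    rw [lap_fst_mul hh, hpd1h]
    ring
  have hg : ContDiff ℝ ∞ g := (contDiff_lap hh).add (contDiff_const.mul hG)
  have h0 : (0 : ℝ × ℝ) ∈ tsupport χ := subset_tsupport χ (by simp [hone.self_of_nhds])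
  have hgsupp : HasCompactSupport g := by
    refine HasCompactSupport.intro hsupp <| eqOn_zero_of_fst_mul hg.continuous.continuousOn
      (isClosed_tsupport χ).isOpen_compl fun x hx => ?_
    have hx0 : x ≠ 0 := by rintro rfl; exact hx h0
    have hq := profile_eventuallyEq_invNormSq (a₀ := a₀) hx
    calc x.1 * g x = x.1 * lap h x + 2 * pd1 h x := by rw [hpd1h]; ring
      _ = x.1 * lap invNormSq x + 2 * pd1 invNormSq x := by rw [hq.lap_eq, hq.pd1_eq]
      _ = 0 := fst_mul_lap_invNormSq_add_two_mul_pd1 hx0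
  have hpos := profile_pos ha₀ hrange hone
  have hcoef : ContDiff ℝ ∞ fun x => c x ^ 2 / h x := (hc.pow 2).div hh fun x => (hpos x).ne'
  refine ⟨fun x => c x ^ 2 / h x * g x, hcoef.mul hg,
    HasCompactSupport.mul_left (f := fun x => c x ^ 2 / h x) hgsupp, fun x => ?_⟩
  have hx : h x ≠ 0 := (hpos x).ne'
  rw [funext fst_mul_profile, hlap, fst_mul_profile]
  field_simp
  ring

/-- For `a₀ > 0`, a cutoff `χ` as before (smooth, compactly supported,
`0 ≤ χ ≤ 1`, `χ ≡ 1` near `0`, `∂₁χ(0,x₂) = 0`), and a smooth wave speed `c`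
with `0 < c_m ≤ c ≤ c_M`, there is a smooth compactly supported real potential
`V` such that `(−c² Δ + V) u_p = 0` for
`u_p(x) = (1−χ(x)) x₁/|x|² + χ(x) a₀ x₁`: so `−c²Δ + V` has `u_p` as a
`p`-resonant state. -/
theorem stmt7 (a₀ : ℝ) (ha₀ : 0 < a₀) (χ : ℝ × ℝ → ℝ) (hχ : ContDiff ℝ (⊤ : ℕ∞) χ)
    (hsupp : HasCompactSupport χ) (hrange : ∀ x, 0 ≤ χ x ∧ χ x ≤ 1)
    (hone : ∀ᶠ x in nhds (0 : ℝ × ℝ), χ x = 1)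
    (hflat : ∀ x₂ : ℝ, pd1 χ (0, x₂) = 0)
    (c : ℝ × ℝ → ℝ) (hc : ContDiff ℝ (⊤ : ℕ∞) c) (c_m c_M : ℝ) (hcm : 0 < c_m)
    (hbnd : ∀ x, c_m ≤ c x ∧ c x ≤ c_M) :
    ∃ V : ℝ × ℝ → ℝ, ContDiff ℝ (⊤ : ℕ∞) V ∧ HasCompactSupport V ∧
      ∀ x : ℝ × ℝ,
        -(c x) ^ 2 * lap (fun y => (1 - χ y) * (y.1 / (y.1 ^ 2 + y.2 ^ 2)) + χ y * (a₀ * y.1)) x +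
          V x * ((1 - χ x) * (x.1 / (x.1 ^ 2 + x.2 ^ 2)) + χ x * (a₀ * x.1)) = 0 :=
  stmt7_general a₀ ha₀ χ hχ hsupp hrange hone hflat c hc
end
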